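/- Let φ: G → K be a homomorphism of finite groups, U_K a complete K-set universe and U_G a complete G-set universe. Then for any two G-equivariant injective maps α₁, α₂: φ*(U_K) → U_G there exist G-equivariant injective maps β₁, β₂: U_G → U_G such that β₁ ∘ α₁ = β₂ ∘ α₂. -/

import Mathlib

/-!
Since `G` is finite, every countable `G`-set embeds equivariantly into `U_G`: enumerate
its orbits and embed them one after another, each one avoiding the finite image of the
earlier ones; completeness applied to `N + 1` disjoint copies of a finite `G`-set yields a
copy missing any given `N` points. Embedding `U_G ⊕ U_G` gives equivariant self-injections
`j₁, j₂` of `U_G` with disjoint images. Then `β₁ = j₁` and `β₂` is `j₁ ∘ α₁ ∘ α₂⁻¹` on the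
image of `α₂` and `j₂` off it.
-/

/-- A complete `G`-set universe: a countable `G`-set into which every finite
`G`-set admits a `G`-equivariant injective map. -/
def IsCompleteUniverse (G : Type) [Group G] (U : Type) [MulAction G U] : Prop :=
  Countable U ∧
    ∀ (M : Type) [Fintype M] [MulAction G M],
      ∃ f : M → U, Function.Injective f ∧ ∀ (g : G) (m : M), f (g • m) = g • f m

open Function

theorem exists_injective_sigma_of_forall_avoiding {U : Type*} {α : ℕ → Type*}
    [∀ n, Finite (α n)] (P : ∀ n, (α n → U) → Prop)
    (hP : ∀ n (S : Set U), S.Finite → ∃ f, P n f ∧ Injective f ∧ ∀ a, f a ∉ S) :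
    ∃ F : ∀ n, α n → U, (∀ n, P n (F n)) ∧ Injective fun p : Σ n, α n ↦ F p.1 p.2 := by
  choose E hEP hEinj hEavoid using hP
  let used : ℕ → {S : Set U // S.Finite} :=
    Nat.rec ⟨∅, Set.finite_empty⟩ fun n S ↦
      ⟨S ∪ Set.range (E n S S.2), S.2.union (Set.finite_range _)⟩
  have used_mono : Monotone fun n ↦ (used n).1 :=
    monotone_nat_of_le_succ fun n ↦ Set.subset_union_left
  have range_subset {m n : ℕ} (h : m < n) :
      Set.range (E m (used m).1 (used m).2) ⊆ (used n).1 :=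
    (Set.subset_union_right : _ ⊆ (used (m + 1)).1).trans (used_mono h)
  refine ⟨fun n ↦ E n (used n).1 (used n).2, fun n ↦ hEP _ _ _, ?_⟩
  have images_ne {m n : ℕ} (h : m < n) (a : α m) (b : α n) :
      E m (used m).1 (used m).2 a ≠ E n (used n).1 (used n).2 b :=
    fun hab ↦ hEavoid _ _ _ b (hab ▸ range_subset h ⟨a, rfl⟩)
  rintro ⟨m, a⟩ ⟨n, b⟩ hab
  rcases lt_trichotomy m n with h | rfl | h
  · exact absurd hab (images_ne h a b)
  · exact congrArg (Sigma.mk m) (hEinj _ _ _ hab)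
  · exact absurd hab.symm (images_ne h b a)

theorem Function.Injective.injective_extend {α β γ : Type*} {f : α → β} {g : α → γ}
    {e' : β → γ} (hf : Injective f) (hg : Injective g) (he' : Injective e')
    (hdisj : ∀ a b, g a ≠ e' b) : Injective (extend f g e') := by
  intro b₁ b₂ h
  by_cases h₁ : ∃ a, f a = b₁ <;> by_cases h₂ : ∃ a, f a = b₂
  · obtain ⟨a₁, rfl⟩ := h₁
    obtain ⟨a₂, rfl⟩ := h₂
    rw [hf.extend_apply, hf.extend_apply] at h
    rw [hg h]
  · obtain ⟨a₁, rfl⟩ := h₁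
    rw [hf.extend_apply, extend_apply' _ _ _ h₂] at h
    exact absurd h (hdisj _ _)
  · obtain ⟨a₂, rfl⟩ := h₂
    rw [hf.extend_apply, extend_apply' _ _ _ h₁] at h
    exact absurd h.symm (hdisj _ _)
  · rw [extend_apply' _ _ _ h₁, extend_apply' _ _ _ h₂] at h
    exact he' h

namespace IsCompleteUniverse

variable {G U : Type} [Group G] [MulAction G U]

theorem exists_injective_avoiding (hU : IsCompleteUniverse G U) (M : Type) [Fintype M]
    [MulAction G M] (S : Set U) (hS : S.Finite) :
    ∃ f : M → U, Injective f ∧ (∀ (g : G) (m : M), f (g • m) = g • f m) ∧ ∀ m, f m ∉ S := by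
  obtain ⟨F, hF, hFsmul⟩ := hU.2 (Σ _ : Fin (S.ncard + 1), M)
  obtain ⟨i, hi⟩ : ∃ i, ∀ m, F ⟨i, m⟩ ∉ S := by
    by_contra! h
    choose m hm using h
    have := hS.to_subtype
    have := Nat.card_le_card_of_injective (fun i ↦ (⟨F ⟨i, m i⟩, hm i⟩ : S))
      fun i j hij ↦ congrArg Sigma.fst (hF (congrArg Subtype.val hij))
    simp at this
  exact ⟨fun m ↦ F ⟨i, m⟩, fun m m' h ↦ eq_of_heq (Sigma.mk.inj (hF h)).2,
    fun g m ↦ hFsmul g ⟨i, m⟩, hi⟩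

theorem exists_injective_of_finite_fibers (hU : IsCompleteUniverse G U) {X : Type}
    [MulAction G X] (c : X → ℕ) (hc : ∀ (g : G) (x : X), c (g • x) = c x)
    (hfin : ∀ n, (c ⁻¹' {n}).Finite) :
    ∃ f : X → U, Injective f ∧ ∀ (g : G) (x : X), f (g • x) = g • f x := by
  let level (n : ℕ) : SubMulAction G X :=
    { carrier := c ⁻¹' {n}, smul_mem' := fun g x hx ↦ (hc g x).trans hx }
  have (n : ℕ) : Finite (level n) := (hfin n).to_subtype
  obtain ⟨F, hFsmul, hFinj⟩ := exists_injective_sigma_of_forall_avoiding (α := fun n ↦ level n)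
    (fun n f ↦ ∀ (g : G) x, f (g • x) = g • f x) fun n S hS ↦ by
      have := Fintype.ofFinite (level n)
      obtain ⟨f, hf, hfsmul, hfS⟩ := hU.exists_injective_avoiding (level n) S hS
      exact ⟨f, hfsmul, hf, hfS⟩
  have F_congr (x : X) {n : ℕ} (h : c x = n) : F (c x) ⟨x, rfl⟩ = F n ⟨x, h⟩ := by
    subst h; rfl
  refine ⟨fun x ↦ F (c x) ⟨x, rfl⟩, fun x y hxy ↦ ?_, fun g x ↦ ?_⟩
  · exact congrArg (fun p : Σ n, level n ↦ (p.2 : X))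
      (@hFinj ⟨c x, ⟨x, rfl⟩⟩ ⟨c y, ⟨y, rfl⟩⟩ hxy)
  · exact (F_congr (g • x) (hc g x)).trans (hFsmul (c x) g ⟨x, rfl⟩)

theorem exists_injective_of_countable [Finite G] (hU : IsCompleteUniverse G U) (X : Type)
    [MulAction G X] [Countable X] :
    ∃ f : X → U, Injective f ∧ ∀ (g : G) (x : X), f (g • x) = g • f x := by
  obtain ⟨q, hq⟩ := exists_injective_nat (MulAction.orbitRel.Quotient G X)
  let c (x : X) : ℕ := q (Quotient.mk _ x)
  refine hU.exists_injective_of_finite_fibers c (fun g x ↦ by simp [c]) fun n ↦ ?_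
  rcases (c ⁻¹' {n}).eq_empty_or_nonempty with h | ⟨x, hx⟩
  · exact h ▸ Set.finite_empty
  · refine (Set.finite_range fun g : G ↦ g • x).subset fun y hy ↦ ?_
    exact MulAction.orbitRel_apply.mp (Quotient.exact (hq (hy.trans hx.symm)))

theorem exists_injective_disjoint [Finite G] (hU : IsCompleteUniverse G U) :
    ∃ j₁ j₂ : U → U, Injective j₁ ∧ Injective j₂ ∧
      (∀ (g : G) (u : U), j₁ (g • u) = g • j₁ u) ∧
      (∀ (g : G) (u : U), j₂ (g • u) = g • j₂ u) ∧ ∀ u v, j₁ u ≠ j₂ v := by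
  have : Countable U := hU.1
  obtain ⟨j, hj, hjsmul⟩ := hU.exists_injective_of_countable (U ⊕ U)
  exact ⟨j ∘ Sum.inl, j ∘ Sum.inr, hj.comp Sum.inl_injective, hj.comp Sum.inr_injective,
    fun g u ↦ hjsmul g (.inl u), fun g u ↦ hjsmul g (.inr u), fun u v h ↦ Sum.inl_ne_inr (hj h)⟩

end IsCompleteUniverse

theorem exists_injective_comp_eq_of_disjoint {G U V : Type} [Group G] [MulAction G U]
    [MulAction G V] {j₁ j₂ : U → U} (hj₁ : Injective j₁) (hj₂ : Injective j₂)
    (hj₁smul : ∀ (g : G) (u : U), j₁ (g • u) = g • j₁ u)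
    (hj₂smul : ∀ (g : G) (u : U), j₂ (g • u) = g • j₂ u) (hdisj : ∀ u v, j₁ u ≠ j₂ v)
    {α₁ α₂ : V → U} (h₁ : Injective α₁) (h₂ : Injective α₂)
    (e₁ : ∀ (g : G) (v : V), α₁ (g • v) = g • α₁ v)
    (e₂ : ∀ (g : G) (v : V), α₂ (g • v) = g • α₂ v) :
    ∃ β : U → U, Injective β ∧ (∀ (g : G) (u : U), β (g • u) = g • β u) ∧
      j₁ ∘ α₁ = β ∘ α₂ := by
  refine ⟨extend α₂ (j₁ ∘ α₁) j₂,
    h₂.injective_extend (hj₁.comp h₁) hj₂ fun _ _ ↦ hdisj _ _, fun g u ↦ ?_,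
    (extend_comp h₂ _ _).symm⟩
  by_cases hu : ∃ v, α₂ v = u
  · obtain ⟨v, rfl⟩ := hu
    rw [← e₂, h₂.extend_apply, h₂.extend_apply, comp_apply, comp_apply, e₁, hj₁smul]
  · have hgu : ¬∃ v, α₂ v = g • u := fun ⟨v, hv⟩ ↦
      hu ⟨g⁻¹ • v, by rw [e₂, hv, inv_smul_smul]⟩
    rw [extend_apply' _ _ _ hu, extend_apply' _ _ _ hgu, hj₂smul]

theorem stmt7_general {G K : Type} [Group G] [Finite G] [Group K]
    (φ : G →* K) (UK UG : Type) [MulAction K UK] [MulAction G UG]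
    (hUG : IsCompleteUniverse G UG)
    (α₁ α₂ : UK → UG)
    (h₁ : Function.Injective α₁) (h₂ : Function.Injective α₂)
    (e₁ : ∀ (g : G) (v : UK), α₁ (φ g • v) = g • α₁ v)
    (e₂ : ∀ (g : G) (v : UK), α₂ (φ g • v) = g • α₂ v) :
    ∃ β₁ β₂ : UG → UG,
      Function.Injective β₁ ∧ Function.Injective β₂ ∧
      (∀ (g : G) (u : UG), β₁ (g • u) = g • β₁ u) ∧
      (∀ (g : G) (u : UG), β₂ (g • u) = g • β₂ u) ∧
      β₁ ∘ α₁ = β₂ ∘ α₂ := by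
  obtain ⟨j₁, j₂, hj₁, hj₂, hj₁smul, hj₂smul, hdisj⟩ := hUG.exists_injective_disjoint
  -- `UK` becomes the `G`-set `φ*(U_K)`
  let : MulAction G UK := MulAction.compHom UK φ
  obtain ⟨β, hβ, hβsmul, hcomp⟩ :=
    exists_injective_comp_eq_of_disjoint hj₁ hj₂ hj₁smul hj₂smul hdisj h₁ h₂ e₁ e₂
  exact ⟨j₁, β, hj₁, hβ, hj₁smul, hβsmul, hcomp⟩

/-- Let `φ : G → K` be a homomorphism of finite groups, `U_K` a
complete `K`-set universe and `U_G` a complete `G`-set universe. Any two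
`G`-equivariant injections `α₁, α₂ : φ*(U_K) → U_G` are coequalized by
`G`-equivariant self-injections of `U_G`: there are `G`-equivariant injections
`β₁, β₂ : U_G → U_G` with `β₁ ∘ α₁ = β₂ ∘ α₂`.
(`G`-equivariance of `αᵢ` on the restricted `G`-set `φ*(U_K)` means
`αᵢ (φ g • v) = g • αᵢ v`.) -/
theorem stmt7 {G K : Type} [Group G] [Finite G] [Group K] [Finite K]
    (φ : G →* K) (UK UG : Type) [MulAction K UK] [MulAction G UG]
    (hUK : IsCompleteUniverse K UK) (hUG : IsCompleteUniverse G UG)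
    (α₁ α₂ : UK → UG)
    (h₁ : Function.Injective α₁) (h₂ : Function.Injective α₂)
    (e₁ : ∀ (g : G) (v : UK), α₁ (φ g • v) = g • α₁ v)
    (e₂ : ∀ (g : G) (v : UK), α₂ (φ g • v) = g • α₂ v) :
    ∃ β₁ β₂ : UG → UG,
      Function.Injective β₁ ∧ Function.Injective β₂ ∧
      (∀ (g : G) (u : UG), β₁ (g • u) = g • β₁ u) ∧
      (∀ (g : G) (u : UG), β₂ (g • u) = g • β₂ u) ∧
      β₁ ∘ α₁ = β₂ ∘ α₂ :=
  stmt7_general φ UK UG hUG α₁ α₂ h₁ h₂ e₁ e₂
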